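/- arXiv:1707.07018 — 5 statements merged into one kernel-verified Lean document; each statement's English description precedes it below -/
import Mathlib

section
/- Let p be a prime, G a group, θ : G → 1 + pℤₚ a homomorphism, and c : G → ℤₚ a 1-cocycle (c(gh) = c(g) + θ(g)·c(h)). Then for every i ≥ 1, c maps the i-th term G^{(i,p)} of the lower p-central series into p^{i−1}ℤₚ. -/
/-- The lower `p`-central series of a group, indexed so that `lowerPCentral p G 0 = G`
corresponds to `G^{(1,p)}` and `lowerPCentral p G i` to `G^{(i+1,p)}`. -/
def lowerPCentral (p : ℕ) (G : Type*) [Group G] : ℕ → Subgroup G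
  | 0 => ⊤
  | i + 1 =>
    Subgroup.closure
      ({x | ∃ h ∈ lowerPCentral p G i, x = h ^ p} ∪
        {x | ∃ g : G, ∃ h ∈ lowerPCentral p G i, x = g⁻¹ * h⁻¹ * g * h})

/-!
Let `I = pℤₚ`. By induction on `i`, every `g ∈ G^{(i+1,p)}` satisfies both `θ g ≡ 1 mod I^{i+1}`
and `c g ∈ I^i`; the elements with these two properties form a subgroup, so only the generators
need checking. For a `p`-th power, `c (h^p) = (1 + θ h + ⋯ + θ h^{p-1}) c h` and
`θ (h^p) - 1 = (θ h - 1)(1 + θ h + ⋯ + θ h^{p-1})`, where the geometric sum is `≡ p ≡ 0 mod I`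
because `θ h ≡ 1`. For a commutator, `θ [g, h] = 1` and
`c [g, h] = θ(hg)⁻¹ ((θ g - 1) c h - (θ h - 1) c g)`.
This works verbatim for any ideal `I` of a commutative ring containing `p` and all `θ g - 1`.
-/

open Finset

theorem geom_sum_mem_of_sub_one_mem {R : Type*} [CommRing R] {I : Ideal R} {u : R}
    (hu : u - 1 ∈ I) {n : ℕ} (hn : (n : R) ∈ I) : ∑ j ∈ range n, u ^ j ∈ I := by
  have hu' : Ideal.Quotient.mk I u = 1 := by
    rw [← map_one (Ideal.Quotient.mk I), Ideal.Quotient.eq]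
    exact hu
  rw [← Ideal.Quotient.eq_zero_iff_mem] at hn ⊢
  simpa [map_sum, hu'] using hn

section Cocycle

variable {G R : Type*} [Group G] [CommRing R]

def IsCocycle (θ : G →* Rˣ) (c : G → R) : Prop :=
  ∀ g h : G, c (g * h) = c g + θ g * c h

namespace IsCocycle

variable {θ : G →* Rˣ} {c : G → R}

theorem map_one (hc : IsCocycle θ c) : c 1 = 0 := by
  simpa using hc 1 1

theorem map_inv (hc : IsCocycle θ c) (g : G) : c g⁻¹ = -↑(θ g)⁻¹ * c g := by
  have h := hc g⁻¹ g
  rw [inv_mul_cancel, hc.map_one, _root_.map_inv] at h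
  linear_combination -h

theorem map_pow (hc : IsCocycle θ c) (g : G) (n : ℕ) :
    c (g ^ n) = (∑ j ∈ range n, (θ g : R) ^ j) * c g := by
  induction n with
  | zero => simp [hc.map_one]
  | succ n ih =>
    rw [pow_succ', hc, ih, geom_sum_succ]
    ring

theorem map_commutator (hc : IsCocycle θ c) (g h : G) :
    c (g⁻¹ * h⁻¹ * g * h) = ↑(θ (h * g))⁻¹ * ((θ g - 1) * c h - (θ h - 1) * c g) := by
  have key := hc (h * g) (g⁻¹ * h⁻¹ * g * h)
  rw [show h * g * (g⁻¹ * h⁻¹ * g * h) = g * h by group, hc g, hc h] at key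
  have hu : (↑(θ (h * g))⁻¹ : R) * θ (h * g) = 1 := Units.inv_mul _
  linear_combination -↑(θ (h * g))⁻¹ * key - c (g⁻¹ * h⁻¹ * g * h) * hu

def subgroupPreimage (hc : IsCocycle θ c) (J : Ideal R) : Subgroup G where
  carrier := {g | c g ∈ J}
  one_mem' := by simp [hc.map_one]
  mul_mem' {a b} ha hb := by
    rw [Set.mem_ofPred_eq, hc]
    exact J.add_mem ha (J.mul_mem_left _ hb)
  inv_mem' {a} ha := by
    rw [Set.mem_ofPred_eq, hc.map_inv]
    exact J.mul_mem_left _ ha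

@[simp]
theorem mem_subgroupPreimage (hc : IsCocycle θ c) {J : Ideal R} {g : G} :
    g ∈ hc.subgroupPreimage J ↔ c g ∈ J :=
  Iff.rfl

end IsCocycle

def kerModIdeal (θ : G →* Rˣ) (J : Ideal R) : Subgroup G :=
  ((Units.map (Ideal.Quotient.mk J : R →* R ⧸ J)).comp θ).ker

@[simp]
theorem mem_kerModIdeal {θ : G →* Rˣ} {J : Ideal R} {g : G} :
    g ∈ kerModIdeal θ J ↔ (θ g : R) - 1 ∈ J := by
  rw [kerModIdeal, MonoidHom.mem_ker, Units.ext_iff, ← Ideal.Quotient.eq]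
  simp

end Cocycle

theorem IsCocycle.lowerPCentral_le {G R : Type*} [Group G] [CommRing R] {θ : G →* Rˣ}
    {c : G → R} (hc : IsCocycle θ c) {p : ℕ} {I : Ideal R} (hp : (p : R) ∈ I)
    (hθ : ∀ g, (θ g : R) - 1 ∈ I) (n : ℕ) :
    lowerPCentral p G n ≤ kerModIdeal θ (I ^ (n + 1)) ⊓ hc.subgroupPreimage (I ^ n) := by
  induction n with
  | zero => intro g _; simpa using hθ g
  | succ n ih =>
    simp only [SetLike.le_def, Subgroup.mem_inf, mem_kerModIdeal,
      IsCocycle.mem_subgroupPreimage] at ih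
    rw [lowerPCentral, Subgroup.closure_le, Set.union_subset_iff]
    simp only [Set.subset_def, SetLike.mem_coe, Subgroup.mem_inf, mem_kerModIdeal,
      IsCocycle.mem_subgroupPreimage]
    constructor
    · rintro _ ⟨h, hh, rfl⟩
      obtain ⟨hθh, hch⟩ := ih hh
      have hsum := geom_sum_mem_of_sub_one_mem (hθ h) hp
      constructor
      · rw [_root_.map_pow, Units.val_pow_eq_pow_val, ← mul_geom_sum, pow_succ _ (n + 1)]
        exact Ideal.mul_mem_mul hθh hsum
      · rw [hc.map_pow, pow_succ']
        exact Ideal.mul_mem_mul hsum hch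
    · rintro _ ⟨g, h, hh, rfl⟩
      obtain ⟨hθh, hch⟩ := ih hh
      constructor
      · simp [mul_comm]
      · rw [hc.map_commutator, pow_succ']
        refine Ideal.mul_mem_left _ _ (sub_mem (Ideal.mul_mem_mul (hθ g) hch) ?_)
        exact Ideal.mul_mem_right _ _ (pow_succ' I n ▸ hθh)

theorem stmt8 (p : ℕ) [Fact p.Prime] {G : Type*} [Group G]
    (θ : G →* ℤ_[p]ˣ)
    (hθ : ∀ g : G, ∃ y : ℤ_[p], (θ g : ℤ_[p]) = 1 + (p : ℤ_[p]) * y)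
    (c : G → ℤ_[p])
    (hc : ∀ g h : G, c (g * h) = c g + (θ g : ℤ_[p]) * c h) :
    ∀ (i : ℕ) (g : G), g ∈ lowerPCentral p G i →
      ∃ y : ℤ_[p], c g = (p : ℤ_[p]) ^ i * y := by
  intro i g hg
  have hθp : ∀ g, (θ g : ℤ_[p]) - 1 ∈ Ideal.span {(p : ℤ_[p])} := fun g => by
    obtain ⟨y, hy⟩ := hθ g
    exact Ideal.mem_span_singleton.2 ⟨y, by rw [hy, add_sub_cancel_left]⟩
  have hcg : c g ∈ Ideal.span {(p : ℤ_[p])} ^ i :=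
    (Subgroup.mem_inf.1 (IsCocycle.lowerPCentral_le (θ := θ) hc
      (Ideal.mem_span_singleton_self _) hθp i hg)).2
  rwa [Ideal.span_singleton_pow, Ideal.mem_span_singleton] at hcg
end

section
/- Let θ : G → ℤₚˣ be a homomorphism with torsion-free image acting on ℤₚ, and suppose λ ∈ pℤₚ is nonzero. If θ(g) ≠ 1, then (θ(g)^λ − 1)/(θ(g) − 1) ≠ 0, and if θ(g) = 1 then λ ≠ 0; in either case, any 1-cocycle c : G → ℤₚ with c(g) = 1 satisfies c(g^λ) ≠ 0. (Equivalently: for a unit u ∈ 1 + pℤₚ of infinite order or u = 1, and 0 ≠ λ ∈ pℤₚ, the quantity equal to λ when u = 1, and (u^λ − 1)/(u − 1) when u ≠ 1, is nonzero in ℤₚ.) -/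
/-!
For `u ≡ 1 mod p` the value `‖u ^ m - 1‖` depends only on the `p`-adic valuation of the integer
`m`: writing `m = ± p ^ v * m'` with `p ∤ m'`, the geometric sum `1 + x + ⋯ + x ^ (m' - 1)` for
`x = u ^ p ^ v` is `≡ m' mod p`, hence a unit. Since `a n → λ ≠ 0`, eventually `‖a n‖ = ‖λ‖`, so
`‖u ^ a n - 1‖` is eventually the constant `‖u ^ p ^ v(λ) - 1‖`, which is nonzero because `u` has
infinite order. Hence `‖w - 1‖ ≠ 0`, and `(u - 1) q = w - 1` forces `q ≠ 0`.
-/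

open Filter Topology

theorem Filter.Tendsto.eventually_norm_eq {α E : Type*} [NormedAddCommGroup E]
    [IsUltrametricDist E] {f : α → E} {l : Filter α} {x : E} (hf : Tendsto f l (𝓝 x)) (hx : x ≠ 0) :
    ∀ᶠ n in l, ‖f n‖ = ‖x‖ := by
  filter_upwards [hf.eventually (Metric.ball_mem_nhds x (norm_pos_iff.mpr hx))] with n hn
  rw [dist_eq_norm] at hn
  rw [← sub_add_cancel (f n) x, IsUltrametricDist.norm_add_eq_max_of_norm_ne_norm hn.ne,
    max_eq_right hn.le]

namespace PadicInt

variable {p : ℕ} [Fact p.Prime]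

lemma norm_pow_sub_one_le (x : ℤ_[p]) (n : ℕ) : ‖x ^ n - 1‖ ≤ ‖x - 1‖ := by
  rw [← geom_sum_mul, norm_mul]
  exact mul_le_of_le_one_left (norm_nonneg _) (norm_le_one _)

lemma toZMod_eq_one_of_norm_sub_one_lt_one {x : ℤ_[p]} (hx : ‖x - 1‖ < 1) :
    toZMod x = 1 := by
  have hmem : x - 1 ∈ RingHom.ker (toZMod : ℤ_[p] →+* ZMod p) := by
    rw [ker_toZMod, IsLocalRing.mem_maximalIdeal]
    exact mem_nonunits.mpr hx
  rw [RingHom.mem_ker, map_sub, map_one, sub_eq_zero] at hmem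
  exact hmem

lemma norm_geom_sum_eq_one {x : ℤ_[p]} (hx : ‖x - 1‖ < 1) {n : ℕ} (hn : ¬ p ∣ n) :
    ‖∑ i ∈ Finset.range n, x ^ i‖ = 1 := by
  rw [← isUnit_iff, ← IsLocalRing.notMem_maximalIdeal, ← ker_toZMod, RingHom.mem_ker,
    map_sum]
  simpa [toZMod_eq_one_of_norm_sub_one_lt_one hx, ZMod.natCast_eq_zero_iff] using hn

lemma norm_pow_sub_one_of_not_dvd {x : ℤ_[p]} (hx : ‖x - 1‖ < 1) {n : ℕ} (hn : ¬ p ∣ n) :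
    ‖x ^ n - 1‖ = ‖x - 1‖ := by
  rw [← geom_sum_mul, norm_mul, norm_geom_sum_eq_one hx hn, one_mul]

lemma norm_pow_sub_one_eq_pow_padicValNat {x : ℤ_[p]} (hx : ‖x - 1‖ < 1) {n : ℕ} (hn : n ≠ 0) :
    ‖x ^ n - 1‖ = ‖x ^ p ^ padicValNat p n - 1‖ := by
  have hp : p.Prime := Fact.out
  obtain ⟨v, m, hm, rfl⟩ := Nat.exists_eq_pow_mul_and_not_dvd hn p hp.ne_one
  rw [padicValNat.mul (pow_ne_zero _ hp.ne_zero) (by rintro rfl; exact hm (dvd_zero p)),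
    padicValNat.prime_pow, padicValNat.eq_zero_of_not_dvd hm, add_zero, pow_mul]
  exact norm_pow_sub_one_of_not_dvd ((norm_pow_sub_one_le x _).trans_lt hx) hm

lemma valuation_intCast (m : ℤ) : (m : ℤ_[p]).valuation = padicValInt p m := by
  have := Padic.valuation_intCast (p := p) m
  rw [← coe_intCast, valuation_coe] at this
  exact_mod_cast this

lemma norm_units_inv_sub_one (u : ℤ_[p]ˣ) :
    ‖((u⁻¹ : ℤ_[p]ˣ) : ℤ_[p]) - 1‖ = ‖(u : ℤ_[p]) - 1‖ := by
  have h : 1 - ((u⁻¹ : ℤ_[p]ˣ) : ℤ_[p]) = ((u⁻¹ : ℤ_[p]ˣ) : ℤ_[p]) * ((u : ℤ_[p]) - 1) := by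
    rw [mul_sub_one, u.inv_mul]
  rw [← norm_neg, neg_sub, h, norm_mul, norm_units, one_mul]

lemma norm_units_zpow_sub_one (u : ℤ_[p]ˣ) (m : ℤ) :
    ‖((u ^ m : ℤ_[p]ˣ) : ℤ_[p]) - 1‖ = ‖(u : ℤ_[p]) ^ m.natAbs - 1‖ := by
  obtain ⟨n, rfl | rfl⟩ := Int.eq_nat_or_neg m
  · simp
  · rw [zpow_neg, zpow_natCast, norm_units_inv_sub_one, Units.val_pow_eq_pow_val, Int.natAbs_neg,
      Int.natAbs_natCast]

lemma norm_units_zpow_sub_one_eq_pow_valuation {u : ℤ_[p]ˣ} (hu : ‖(u : ℤ_[p]) - 1‖ < 1)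
    {m : ℤ} (hm : m ≠ 0) :
    ‖((u ^ m : ℤ_[p]ˣ) : ℤ_[p]) - 1‖ = ‖(u : ℤ_[p]) ^ p ^ (m : ℤ_[p]).valuation - 1‖ := by
  rw [norm_units_zpow_sub_one, valuation_intCast, padicValInt,
    norm_pow_sub_one_eq_pow_padicValNat hu (Int.natAbs_ne_zero.mpr hm)]

lemma valuation_eq_of_norm_eq {x y : ℤ_[p]} (hx : x ≠ 0) (hy : y ≠ 0) (h : ‖x‖ = ‖y‖) :
    x.valuation = y.valuation := by
  rw [norm_eq_zpow_neg_valuation hx, norm_eq_zpow_neg_valuation hy] at h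
  have hp : (1 : ℝ) < p := mod_cast (Fact.out : p.Prime).one_lt
  simpa using zpow_right_injective₀ (by positivity) hp.ne' h

end PadicInt

theorem stmt9_general (p : ℕ) [Fact p.Prime] (u : ℤ_[p]ˣ)
    (hu : ∃ y : ℤ_[p], (u : ℤ_[p]) = 1 + (p : ℤ_[p]) * y)
    (hu' : ∀ n : ℕ, 0 < n → u ^ n = 1 → u = 1)
    (lam : ℤ_[p]) (hlam : lam ≠ 0)
    (a : ℕ → ℤ)
    (ha : Filter.Tendsto (fun n => ((a n : ℤ) : ℤ_[p])) Filter.atTop (nhds lam))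
    (w : ℤ_[p])
    (hw : Filter.Tendsto (fun n => ((u ^ (a n) : ℤ_[p]ˣ) : ℤ_[p])) Filter.atTop (nhds w))
    (q : ℤ_[p])
    (hq1 : u = 1 → q = lam)
    (hq2 : u ≠ 1 → ((u : ℤ_[p]) - 1) * q = w - 1) :
    q ≠ 0 := by
  by_cases hu1 : u = 1
  · rw [hq1 hu1]
    exact hlam
  have hu_lt : ‖(u : ℤ_[p]) - 1‖ < 1 := by
    obtain ⟨y, hy⟩ := hu
    rw [hy, add_sub_cancel_left, PadicInt.norm_lt_one_iff_dvd]
    exact dvd_mul_right _ _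
  set c := ‖(u : ℤ_[p]) ^ p ^ lam.valuation - 1‖
  have hc : ∀ᶠ n in atTop, ‖((u ^ a n : ℤ_[p]ˣ) : ℤ_[p]) - 1‖ = c := by
    filter_upwards [ha.eventually_norm_eq hlam] with n hn
    have han : ((a n : ℤ) : ℤ_[p]) ≠ 0 := norm_ne_zero_iff.mp (hn ▸ norm_ne_zero_iff.mpr hlam)
    rw [PadicInt.norm_units_zpow_sub_one_eq_pow_valuation hu_lt (by rintro h; simp [h] at han),
      PadicInt.valuation_eq_of_norm_eq han hlam hn]
  have hwc : ‖w - 1‖ = c :=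
    tendsto_nhds_unique (hw.sub_const 1).norm
      (tendsto_const_nhds.congr' (hc.mono fun _ h => h.symm))
  have hc0 : c ≠ 0 := by
    rw [norm_ne_zero_iff, sub_ne_zero]
    intro h
    exact hu1 (hu' _ (pow_pos (Fact.out : p.Prime).pos _) (Units.ext (by simpa using h)))
  intro hq0
  apply hc0
  rw [← hwc, ← hq2 hu1, hq0, mul_zero, norm_zero]

theorem stmt9 (p : ℕ) [Fact p.Prime] (u : ℤ_[p]ˣ)
    (hu : ∃ y : ℤ_[p], (u : ℤ_[p]) = 1 + (p : ℤ_[p]) * y)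
    (hu' : ∀ n : ℕ, 0 < n → u ^ n = 1 → u = 1)
    (lam : ℤ_[p]) (hlam : lam ≠ 0) (hlam' : ∃ μ : ℤ_[p], lam = (p : ℤ_[p]) * μ)
    (a : ℕ → ℤ)
    (ha : Filter.Tendsto (fun n => ((a n : ℤ) : ℤ_[p])) Filter.atTop (nhds lam))
    (w : ℤ_[p])
    (hw : Filter.Tendsto (fun n => ((u ^ (a n) : ℤ_[p]ˣ) : ℤ_[p])) Filter.atTop (nhds w))
    (q : ℤ_[p])
    (hq1 : u = 1 → q = lam)
    (hq2 : u ≠ 1 → ((u : ℤ_[p]) - 1) * q = w - 1) :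
    q ≠ 0 :=
  stmt9_general p u hu hu' lam hlam a ha w hw q hq1 hq2
end

section
/- Let G be a pro-p group with θ : G → 1 + pℤₚ a continuous homomorphism, where p is odd (or more generally the image of θ is torsion free). Then all generators h^{−θ(g)}·g·h·g⁻¹ (g ∈ G, h ∈ ker θ) of K(G,θ) lie in the Frattini subgroup Gᵖ[G,G]; consequently K(G,θ) ⊆ Frat(G). -/
/-!
Since `θ g ≡ 1 (mod p)`, an integer `n` representing `θ g` has the form `n = 1 + p m`, so
`h^(-n) g h g⁻¹ = (h^(-m))^p · [h, g⁻¹]` is a `p`-th power times a commutator.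
-/

theorem PadicInt.dvd_sub_one_of_intCast_eq_one_add_mul {p : ℕ} [Fact p.Prime] {n : ℤ}
    {y : ℤ_[p]} (hn : (n : ℤ_[p]) = 1 + p * y) : (p : ℤ) ∣ n - 1 := by
  have hdvd : (p : ℤ_[p]) ^ 1 ∣ ((n - 1 : ℤ) : ℤ_[p]) := ⟨y, by push_cast; rw [hn]; ring⟩
  simpa using (PadicInt.pow_p_dvd_int_iff 1 (n - 1)).mp hdvd

/-- Generators of `Gᵏ[G, G]`, the Frattini subgroup when `G` is pro-`p` and `k = p`. -/
def powCommutatorSet (G : Type*) [Group G] (k : ℕ) : Set G :=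
  {x | ∃ y : G, x = y ^ k} ∪ {x | ∃ a b : G, x = a⁻¹ * b⁻¹ * a * b}

theorem zpow_neg_mul_conj_mem_closure_powCommutatorSet {G : Type*} [Group G] {k : ℕ} {n : ℤ}
    (hn : (k : ℤ) ∣ n - 1) (g h : G) :
    h ^ (-n) * g * h * g⁻¹ ∈ Subgroup.closure (powCommutatorSet G k) := by
  obtain ⟨m, hm⟩ := hn
  have hpow : h ^ (-n) = (h ^ (-m)) ^ k * h⁻¹ := by
    rw [← zpow_natCast, ← zpow_mul, ← zpow_neg_one, ← zpow_add]
    congr 1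
    linear_combination -hm
  have hsplit : h ^ (-n) * g * h * g⁻¹ = (h ^ (-m)) ^ k * (h⁻¹ * (g⁻¹)⁻¹ * h * g⁻¹) := by
    rw [hpow]; group
  rw [hsplit]
  exact Subgroup.mul_mem _ (Subgroup.subset_closure (Or.inl ⟨h ^ (-m), rfl⟩))
    (Subgroup.subset_closure (Or.inr ⟨h, g⁻¹, rfl⟩))

theorem stmt13 (p : ℕ) [Fact p.Prime] {G : Type*} [Group G] (θ : G →* ℤ_[p]ˣ)
    (hθ : ∀ g : G, ∃ y : ℤ_[p], (θ g : ℤ_[p]) = 1 + (p : ℤ_[p]) * y) :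
    ∀ g h : G, θ h = 1 → ∀ n : ℤ, ((θ g : ℤ_[p])) = (n : ℤ_[p]) →
      h ^ (-n) * g * h * g⁻¹ ∈
        Subgroup.closure
          ({x : G | ∃ y : G, x = y ^ p} ∪ {x : G | ∃ a b : G, x = a⁻¹ * b⁻¹ * a * b}) := by
  intro g h _ n hn
  obtain ⟨y, hy⟩ := hθ g
  exact zpow_neg_mul_conj_mem_closure_powCommutatorSet
    (PadicInt.dvd_sub_one_of_intCast_eq_one_add_mul (hn ▸ hy)) g h
end

section
/- Let S be a free group on generators x₁,…,x_d, let 0 ≠ λ be an integer divisible by p, let S₁ be the subgroup generated by x₂,…,x_d, and let r = x₁^λ·s with s ∈ S₁. Let θ : S → ℤₚˣ be any homomorphism with torsion-free image in 1 + pℤₚ. Then there is no 1-cocycle c : S → ℤₚ (with respect to θ) satisfying c(x₁) = 1, c(x_i) = 0 for 2 ≤ i ≤ d, and c(r) = 0. -/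
/-!
A crossed homomorphism vanishes on the subgroup generated by the elements where it vanishes, so
`c (x₁ ^ λ * s) = c (x₁ ^ λ)`. On the powers of `g := x₁` one has
`c (g ^ m) = (1 + u + ⋯ + u ^ (m - 1)) * c g` with `u := θ g`, so `c (g ^ λ) = 0`, equivalently `c (g ^ |λ|) = 0`, forces the
geometric sum to vanish; multiplying by `u - 1` gives `u ^ |λ| = 1`, hence `u = 1` by torsion-freeness,
and then the geometric sum is `|λ| ≠ 0`.
-/

open Finset

variable {G R : Type*} [Group G] [Ring R]

/-- A `1`-cocycle of `G` with values in `R`, for the action of `G` on `R` through `θ`. -/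
def IsCrossedHom (θ : G →* Rˣ) (c : G → R) : Prop :=
  ∀ g h : G, c (g * h) = c g + (θ g : R) * c h

namespace IsCrossedHom

variable {θ : G →* Rˣ} {c : G → R}

theorem map_one (hc : IsCrossedHom θ c) : c 1 = 0 := by
  simpa using hc 1 1

theorem map_inv (hc : IsCrossedHom θ c) (g : G) : c g⁻¹ = -(θ g⁻¹ : R) * c g := by
  have h := hc g⁻¹ g
  rw [inv_mul_cancel, hc.map_one] at h
  rw [neg_mul, eq_neg_iff_add_eq_zero, ← h]

theorem map_mul_of_eq_zero (hc : IsCrossedHom θ c) (g : G) {h : G} (hh : c h = 0) :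
    c (g * h) = c g := by
  rw [hc, hh, mul_zero, add_zero]

def zeroSubgroup (hc : IsCrossedHom θ c) : Subgroup G where
  carrier := {g | c g = 0}
  one_mem' := hc.map_one
  mul_mem' {a _} ha hb := (hc.map_mul_of_eq_zero a hb).trans ha
  inv_mem' {a} ha := (hc.map_inv a).trans (by rw [ha, mul_zero])

theorem eq_zero_of_mem_closure (hc : IsCrossedHom θ c) {T : Set G} (hT : ∀ t ∈ T, c t = 0)
    {s : G} (hs : s ∈ Subgroup.closure T) : c s = 0 :=
  (Subgroup.closure_le hc.zeroSubgroup).2 hT hs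

theorem map_pow (hc : IsCrossedHom θ c) (g : G) (m : ℕ) :
    c (g ^ m) = (∑ i ∈ range m, (θ g : R) ^ i) * c g := by
  induction m with
  | zero => simp [hc.map_one]
  | succ m ih => rw [pow_succ, hc, ih, _root_.map_pow, sum_range_succ, Units.val_pow_eq_pow_val, add_mul]

theorem map_pow_natAbs_eq_zero (hc : IsCrossedHom θ c) (g : G) {k : ℤ} (hk : c (g ^ k) = 0) :
    c (g ^ k.natAbs) = 0 := by
  rcases Int.natAbs_eq k with hk' | hk' <;> rw [hk'] at hk
  · exact_mod_cast hk
  · rw [zpow_neg, zpow_natCast, hc.map_inv, neg_mul, neg_eq_zero, Units.mul_right_eq_zero] at hk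
    exact hk

theorem eq_zero_of_map_pow_eq_zero [NoZeroDivisors R] [CharZero R] (hc : IsCrossedHom θ c)
    {g : G} (htf : ∀ m : ℕ, 0 < m → θ g ^ m = 1 → θ g = 1) (hg : c g ≠ 0) {m : ℕ}
    (hm : c (g ^ m) = 0) : m = 0 := by
  have hsum : ∑ i ∈ range m, (θ g : R) ^ i = 0 :=
    (mul_eq_zero.1 (hc.map_pow g m ▸ hm)).resolve_right hg
  by_contra hm0
  have hθ : θ g = 1 := by
    refine htf m (Nat.pos_of_ne_zero hm0) (Units.ext ?_)
    rw [Units.val_pow_eq_pow_val, Units.val_one, ← sub_eq_zero, ← geom_sum_mul, hsum, zero_mul]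
  simp only [hθ, Units.val_one, one_pow, sum_const, card_range, nsmul_eq_mul, mul_one,
    Nat.cast_eq_zero] at hsum
  exact hm0 hsum

theorem eq_zero_of_map_zpow_eq_zero [NoZeroDivisors R] [CharZero R] (hc : IsCrossedHom θ c)
    {g : G} (htf : ∀ m : ℕ, 0 < m → θ g ^ m = 1 → θ g = 1) (hg : c g ≠ 0) {k : ℤ}
    (hk : c (g ^ k) = 0) : k = 0 :=
  Int.natAbs_eq_zero.1 (hc.eq_zero_of_map_pow_eq_zero htf hg (hc.map_pow_natAbs_eq_zero g hk))

end IsCrossedHom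

theorem stmt16_general (p : ℕ) [Fact p.Prime] (n : ℕ)
    (lam : ℤ) (hlam : lam ≠ 0)
    (s : FreeGroup (Fin (n + 1)))
    (hs : s ∈ Subgroup.closure
      {x : FreeGroup (Fin (n + 1)) | ∃ i : Fin (n + 1), i ≠ 0 ∧ x = FreeGroup.of i})
    (θ : FreeGroup (Fin (n + 1)) →* ℤ_[p]ˣ)
    (hθtf : ∀ (g : FreeGroup (Fin (n + 1))) (k : ℕ), 0 < k → (θ g) ^ k = 1 → θ g = 1) :
    ¬∃ c : FreeGroup (Fin (n + 1)) → ℤ_[p],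
      (∀ g h : FreeGroup (Fin (n + 1)), c (g * h) = c g + (θ g : ℤ_[p]) * c h) ∧
      c (FreeGroup.of (0 : Fin (n + 1))) = 1 ∧
      (∀ i : Fin (n + 1), i ≠ 0 → c (FreeGroup.of i) = 0) ∧
      c ((FreeGroup.of (0 : Fin (n + 1))) ^ lam * s) = 0 := by
  rintro ⟨c, hc, hc₀, hcᵢ, hr⟩
  replace hc : IsCrossedHom θ c := hc
  have hcs : c s = 0 := hc.eq_zero_of_mem_closure (by rintro _ ⟨i, hi, rfl⟩; exact hcᵢ i hi) hs
  rw [hc.map_mul_of_eq_zero _ hcs] at hr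
  exact hlam (hc.eq_zero_of_map_zpow_eq_zero (hθtf _) (by simp [hc₀]) hr)

theorem stmt16 (p : ℕ) [Fact p.Prime] (n : ℕ)
    (lam : ℤ) (hlam : lam ≠ 0) (hlam' : (p : ℤ) ∣ lam)
    (s : FreeGroup (Fin (n + 1)))
    (hs : s ∈ Subgroup.closure
      {x : FreeGroup (Fin (n + 1)) | ∃ i : Fin (n + 1), i ≠ 0 ∧ x = FreeGroup.of i})
    (θ : FreeGroup (Fin (n + 1)) →* ℤ_[p]ˣ)
    (hθim : ∀ g : FreeGroup (Fin (n + 1)), ∃ y : ℤ_[p], (θ g : ℤ_[p]) = 1 + (p : ℤ_[p]) * y)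
    (hθtf : ∀ (g : FreeGroup (Fin (n + 1))) (k : ℕ), 0 < k → (θ g) ^ k = 1 → θ g = 1) :
    ¬∃ c : FreeGroup (Fin (n + 1)) → ℤ_[p],
      (∀ g h : FreeGroup (Fin (n + 1)), c (g * h) = c g + (θ g : ℤ_[p]) * c h) ∧
      c (FreeGroup.of (0 : Fin (n + 1))) = 1 ∧
      (∀ i : Fin (n + 1), i ≠ 0 → c (FreeGroup.of i) = 0) ∧
      c ((FreeGroup.of (0 : Fin (n + 1))) ^ lam * s) = 0 :=
  stmt16_general p n lam hlam s hs θ hθtf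
end

section
/- Let F be a field of characteristic ≠ p containing a primitive p-th root of unity (with √−1 ∈ F if p = 2), E = F(∜[p^∞]{F}), and θ : Gal(E/F) → 1 + pℤₚ the cyclotomic character. Then for every σ ∈ Gal(E/F) and every τ ∈ Gal(E/F(μ_{p^∞})), one has στσ⁻¹ = τ^{θ(σ)}; that is, conjugation by σ acts on the abelian normal subgroup Gal(E/F(μ_{p^∞})) by exponentiation by θ(σ). -/
open IntermediateField

theorem AlgEquiv.div_self_pow_eq_one_of_pow_eq_algebraMap {F K : Type*} [Field F] [Field K]
    [Algebra F K] (τ : K ≃ₐ[F] K) {x : K} {q : ℕ} {a : F} (hx : x ≠ 0)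
    (hxa : x ^ q = algebraMap F K a) : (τ x / x) ^ q = 1 := by
  rw [div_pow, ← map_pow, hxa, AlgEquiv.commutes, ← hxa, div_self (pow_ne_zero q hx)]

theorem map_eq_div_mul_of_map_div_eq {K G : Type*} [Field K] [FunLike G K K] [MulHomClass G K K]
    (f : G) {x y : K} (hx : x ≠ 0) (hyx : f (y / x) = y / x) : f y = f x / x * y := by
  calc f y = f (y / x * x) := by rw [div_mul_cancel₀ y hx]
    _ = f x / x * y := by rw [map_mul, hyx]; field_simp

theorem stmt19_general (p : ℕ) (F : Type*) [Field F]
    (E : IntermediateField F (AlgebraicClosure F))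
    (σ τ : E ≃ₐ[F] E)
    -- τ lies in Gal(E/F(μ_{p^∞})): it fixes all p-power roots of unity
    (hτ : ∀ ζ : E, (∃ m : ℕ, ζ ^ (p ^ m) = 1) → τ ζ = ζ)
    -- t n is an integer representing the cyclotomic character θ(σ) modulo p^n
    (t : ℕ → ℤ)
    (ht : ∀ (ζ : E) (n : ℕ), ζ ^ (p ^ n) = 1 → σ ζ = ζ ^ (t n)) :
    -- conjugation by σ acts on Gal(E/F(μ_{p^∞})) by exponentiation by θ(σ):
    -- on each p^n-th root x of an element of F, writing τ x = ω • x, we have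
    -- (σ τ σ⁻¹) x = ω^{θ(σ)} x
    ∀ (x : E) (n : ℕ) (a : F), x ≠ 0 → x ^ (p ^ n) = algebraMap F E a →
      σ (τ (σ⁻¹ x)) = (τ x / x) ^ (t n) * x := by
  intro x n a hx hxa
  have hy : (σ⁻¹ x) ^ p ^ n = algebraMap F E a := by
    rw [← map_pow, hxa, AlgEquiv.commutes]
  -- σ⁻¹ x and x are p^n-th roots of the same a, so τ fixes their ratio
  have hτy : τ (σ⁻¹ x) = τ x / x * σ⁻¹ x :=
    map_eq_div_mul_of_map_div_eq τ hx
      (hτ _ ⟨n, by rw [div_pow, hy, ← hxa, div_self (pow_ne_zero _ hx)]⟩)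
  rw [hτy, map_mul, AlgEquiv.aut_inv, AlgEquiv.apply_symm_apply,
    ht _ n (τ.div_self_pow_eq_one_of_pow_eq_algebraMap hx hxa)]

theorem stmt19 (p : ℕ) [Fact p.Prime] (F : Type*) [Field F]
    (hchar : (p : F) ≠ 0)
    (hroot : ∃ ζ : F, IsPrimitiveRoot ζ p)
    (hsqrt : p = 2 → ∃ i : F, i ^ 2 = -1)
    (E : IntermediateField F (AlgebraicClosure F))
    (hE : E = IntermediateField.adjoin F
      {x : AlgebraicClosure F | ∃ (n : ℕ) (a : F),
        x ^ (p ^ n) = algebraMap F (AlgebraicClosure F) a})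
    (σ τ : E ≃ₐ[F] E)
    -- τ lies in Gal(E/F(μ_{p^∞})): it fixes all p-power roots of unity
    (hτ : ∀ ζ : E, (∃ m : ℕ, ζ ^ (p ^ m) = 1) → τ ζ = ζ)
    -- t n is an integer representing the cyclotomic character θ(σ) modulo p^n
    (t : ℕ → ℤ)
    (ht : ∀ (ζ : E) (n : ℕ), ζ ^ (p ^ n) = 1 → σ ζ = ζ ^ (t n)) :
    -- conjugation by σ acts on Gal(E/F(μ_{p^∞})) by exponentiation by θ(σ):
    -- on each p^n-th root x of an element of F, writing τ x = ω • x, we have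
    -- (σ τ σ⁻¹) x = ω^{θ(σ)} x
    ∀ (x : E) (n : ℕ) (a : F), x ≠ 0 → x ^ (p ^ n) = algebraMap F E a →
      σ (τ (σ⁻¹ x)) = (τ x / x) ^ (t n) * x :=
  stmt19_general p F E σ τ hτ t ht
end
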